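/- arXiv:1803.09142 — 6 statements merged into one kernel-verified Lean document; each statement's English description precedes it below -/
import Mathlib

section
/- Let n ≥ 1 and let Z : ℝ × ℝⁿ → ℝ, Q, P : ℝ × ℝⁿ → ℝⁿ and f : ℝ → ℝ be smooth maps. Suppose that for every τ ∈ ℝ the map x ↦ (Z(τ,x), Q(τ,x), P(τ,x)) is Legendrian for the contact form dz − p·dq, i.e. for all (τ,x) and all v ∈ ℝⁿ one has D_x Z(τ,x)(v) − ⟪P(τ,x), D_x Q(τ,x)(v)⟫ = 0. Define H : ℝ × ℝⁿ → ℝ by H(s,x) := f′(s)·(∂_τ Z(f(s),x) − ⟪P(f(s),x), ∂_τ Q(f(s),x)⟫), set φ(s,x) := (f(s),x), and define the perturbed trace Γ̃(s,x) := (s, Z(φ(s,x)) + H(s,x), Q(φ(s,x)), P(φ(s,x))). Then the pullback of the 1-form e^s(dz − p·dq) under Γ̃ equals the differential of (s,x) ↦ e^s H(s,x): for all (s,x) ∈ ℝ × ℝⁿ and all (σ,v) ∈ ℝ × ℝⁿ, e^s · ( D(Z∘φ + H)(s,x)(σ,v) − ⟪P(φ(s,x)), D(Q∘φ)(s,x)(σ,v)⟫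 ) = D((s,x) ↦ e^s H(s,x))(s,x)(σ,v). -/
open scoped RealInnerProductSpace

noncomputable section

abbrev Eu (n : ℕ) := EuclideanSpace ℝ (Fin n)

/-- The pullback of the Liouville form `e^s (dz − p·dq)` under the perturbed trace
`Γ̃(s,x) = (s, Z(f s, x) + H(s,x), Q(f s, x), P(f s, x))` of a Legendrian isotopy
equals the differential of `(s,x) ↦ e^s H(s,x)`. -/
theorem statement_0 (n : ℕ) (hn : 1 ≤ n)
    (Z : ℝ × EuclideanSpace ℝ (Fin n) → ℝ)
    (Q P : ℝ × EuclideanSpace ℝ (Fin n) → EuclideanSpace ℝ (Fin n))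
    (f : ℝ → ℝ)
    (hZ : ContDiff ℝ (⊤ : ℕ∞) Z) (hQ : ContDiff ℝ (⊤ : ℕ∞) Q) (hP : ContDiff ℝ (⊤ : ℕ∞) P)
    (hf : ContDiff ℝ (⊤ : ℕ∞) f)
    (hLeg : ∀ (τ : ℝ) (x v : EuclideanSpace ℝ (Fin n)),
      fderiv ℝ (fun x' => Z (τ, x')) x v
        - ⟪P (τ, x), fderiv ℝ (fun x' => Q (τ, x')) x v⟫ = 0)
    (H : ℝ × EuclideanSpace ℝ (Fin n) → ℝ)
    (hH : ∀ (s : ℝ) (x : EuclideanSpace ℝ (Fin n)),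
      H (s, x) = deriv f s *
        (deriv (fun τ => Z (τ, x)) (f s)
          - ⟪P (f s, x), deriv (fun τ => Q (τ, x)) (f s)⟫)) :
    ∀ (s : ℝ) (x : EuclideanSpace ℝ (Fin n)) (σ : ℝ) (v : EuclideanSpace ℝ (Fin n)),
      Real.exp s *
        (fderiv ℝ (fun p : ℝ × EuclideanSpace ℝ (Fin n) => Z (f p.1, p.2) + H p) (s, x) (σ, v)
          - ⟪P (f s, x),
              fderiv ℝ (fun p : ℝ × EuclideanSpace ℝ (Fin n) => Q (f p.1, p.2)) (s, x) (σ, v)⟫)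
      = fderiv ℝ (fun p : ℝ × EuclideanSpace ℝ (Fin n) => Real.exp p.1 * H p) (s, x) (σ, v) := by
  have hZd := hZ.differentiable (by simp)
  have hQd := hQ.differentiable (by simp)
  have hfd : ∀ t : ℝ, HasDerivAt f (deriv f t) t :=
    fun t => (hf.differentiable (by simp) t).hasDerivAt
  -- derivative of φ(p) = (f p.1, p.2)
  have hφ : ∀ p : ℝ × Eu n,
      HasFDerivAt (fun q : ℝ × Eu n => (f q.1, q.2))
        (((ContinuousLinearMap.smulRight (1 : ℝ →L[ℝ] ℝ) (deriv f p.1)).comp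
            (ContinuousLinearMap.fst ℝ ℝ (Eu n))).prod (ContinuousLinearMap.snd ℝ ℝ (Eu n))) p :=
    fun p => by
      have h := ((hfd p.1).hasFDerivAt).comp p hasFDerivAt_fst
      rw [← ContinuousLinearMap.smulRight_one_eq_toSpanSingleton] at h
      exact HasFDerivAt.prodMk h hasFDerivAt_snd
  -- partial derivatives in τ
  have hpartZ : ∀ (τ : ℝ) (x : Eu n),
      deriv (fun t => Z (t, x)) τ = fderiv ℝ Z (τ, x) (1, 0) := by
    intro τ x
    have h : HasDerivAt (fun t => Z (t, x))
        (((fderiv ℝ Z (τ, x)).comp (ContinuousLinearMap.inl ℝ ℝ (Eu n))) 1) τ :=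
      ((hZd (τ, x)).hasFDerivAt.comp τ (hasFDerivAt_prodMk_left τ x)).hasDerivAt
    simpa using h.deriv
  have hpartQ : ∀ (τ : ℝ) (x : Eu n),
      deriv (fun t => Q (t, x)) τ = fderiv ℝ Q (τ, x) (1, 0) := by
    intro τ x
    have h : HasDerivAt (fun t => Q (t, x))
        (((fderiv ℝ Q (τ, x)).comp (ContinuousLinearMap.inl ℝ ℝ (Eu n))) 1) τ :=
      ((hQd (τ, x)).hasFDerivAt.comp τ (hasFDerivAt_prodMk_left τ x)).hasDerivAt
    simpa using h.deriv
  -- partial derivatives in x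
  have hspatZ : ∀ (τ : ℝ) (x v : Eu n),
      fderiv ℝ (fun x' => Z (τ, x')) x v = fderiv ℝ Z (τ, x) (0, v) := by
    intro τ x v
    have h : HasFDerivAt (fun x' => Z (τ, x'))
        ((fderiv ℝ Z (τ, x)).comp (ContinuousLinearMap.inr ℝ ℝ (Eu n))) x :=
      (hZd (τ, x)).hasFDerivAt.comp x (hasFDerivAt_prodMk_right τ x)
    rw [h.fderiv]; simp
  have hspatQ : ∀ (τ : ℝ) (x v : Eu n),
      fderiv ℝ (fun x' => Q (τ, x')) x v = fderiv ℝ Q (τ, x) (0, v) := by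
    intro τ x v
    have h : HasFDerivAt (fun x' => Q (τ, x'))
        ((fderiv ℝ Q (τ, x)).comp (ContinuousLinearMap.inr ℝ ℝ (Eu n))) x :=
      (hQd (τ, x)).hasFDerivAt.comp x (hasFDerivAt_prodMk_right τ x)
    rw [h.fderiv]; simp
  -- smoothness of H
  have hφc : ContDiff ℝ (⊤ : ℕ∞) (fun p : ℝ × Eu n => (f p.1, p.2)) :=
    (hf.comp contDiff_fst).prodMk contDiff_snd
  have hHsmooth : ContDiff ℝ (⊤ : ℕ∞) H := by
    have hEq : H = fun p : ℝ × Eu n => deriv f p.1 *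
        (fderiv ℝ Z (f p.1, p.2) ((1 : ℝ), (0 : Eu n))
          - ⟪P (f p.1, p.2), fderiv ℝ Q (f p.1, p.2) ((1 : ℝ), (0 : Eu n))⟫) := by
      funext p
      obtain ⟨a, b⟩ := p
      rw [hH a b, hpartZ (f a) b, hpartQ (f a) b]
    rw [hEq]
    have hfz : ContDiff ℝ (⊤ : ℕ∞) (fun p : ℝ × Eu n => fderiv ℝ Z (f p.1, p.2)) :=
      (hZ.fderiv_right (by simp)).comp hφc
    have hfq : ContDiff ℝ (⊤ : ℕ∞) (fun p : ℝ × Eu n => fderiv ℝ Q (f p.1, p.2)) :=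
      (hQ.fderiv_right (by simp)).comp hφc
    have h1 : ContDiff ℝ (⊤ : ℕ∞) (fun p : ℝ × Eu n =>
        fderiv ℝ Z (f p.1, p.2) ((1 : ℝ), (0 : Eu n))) := hfz.clm_apply contDiff_const
    have h2 : ContDiff ℝ (⊤ : ℕ∞) (fun p : ℝ × Eu n =>
        fderiv ℝ Q (f p.1, p.2) ((1 : ℝ), (0 : Eu n))) := hfq.clm_apply contDiff_const
    have hdf : ContDiff ℝ (⊤ : ℕ∞) (deriv f) :=
      (contDiff_succ_iff_deriv.mp (by simpa using hf)).2.2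
    exact (hdf.comp contDiff_fst).mul
      (h1.sub (ContDiff.inner ℝ (hP.comp hφc) h2))
  intro s x σ v
  have hHd : DifferentiableAt ℝ H (s, x) := (hHsmooth.differentiable (by simp)) (s, x)
  have hZφ : HasFDerivAt (fun p : ℝ × Eu n => Z (f p.1, p.2))
      ((fderiv ℝ Z (f s, x)).comp
        (((ContinuousLinearMap.smulRight (1 : ℝ →L[ℝ] ℝ) (deriv f s)).comp
            (ContinuousLinearMap.fst ℝ ℝ (Eu n))).prod (ContinuousLinearMap.snd ℝ ℝ (Eu n))))
      (s, x) := (hZd (f s, x)).hasFDerivAt.comp (s, x) (hφ (s, x))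
  have hQφ : HasFDerivAt (fun p : ℝ × Eu n => Q (f p.1, p.2))
      ((fderiv ℝ Q (f s, x)).comp
        (((ContinuousLinearMap.smulRight (1 : ℝ →L[ℝ] ℝ) (deriv f s)).comp
            (ContinuousLinearMap.fst ℝ ℝ (Eu n))).prod (ContinuousLinearMap.snd ℝ ℝ (Eu n))))
      (s, x) := (hQd (f s, x)).hasFDerivAt.comp (s, x) (hφ (s, x))
  have hsum := hZφ.add hHd.hasFDerivAt
  have hexp : HasFDerivAt (fun p : ℝ × Eu n => Real.exp p.1)
      ((ContinuousLinearMap.smulRight (1 : ℝ →L[ℝ] ℝ) (Real.exp s)).comp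
        (ContinuousLinearMap.fst ℝ ℝ (Eu n))) (s, x) :=
    by
      have h1 : HasFDerivAt (@Prod.fst ℝ (Eu n)) (ContinuousLinearMap.fst ℝ ℝ (Eu n)) (s, x) :=
        hasFDerivAt_fst
      have h := (Real.hasDerivAt_exp s).hasFDerivAt.comp (s, x) h1
      rw [← ContinuousLinearMap.smulRight_one_eq_toSpanSingleton] at h
      exact h
  have hmul := hexp.mul hHd.hasFDerivAt
  rw [HasFDerivAt.fderiv (f := fun p : ℝ × Eu n => Z (f p.1, p.2) + H p) hsum, hQφ.fderiv,
    HasFDerivAt.fderiv (f := fun p : ℝ × Eu n => Real.exp p.1 * H p) hmul]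
  -- the key pointwise identity
  have key : fderiv ℝ Z (f s, x) (σ * deriv f s, v)
      - ⟪P (f s, x), fderiv ℝ Q (f s, x) (σ * deriv f s, v)⟫ = σ * H (s, x) := by
    have hsplit : ((σ * deriv f s : ℝ), v)
        = (σ * deriv f s) • ((1 : ℝ), (0 : Eu n)) + ((0 : ℝ), v) := by
      simp [Prod.ext_iff]
    have hx : fderiv ℝ Z (f s, x) (0, v)
        - ⟪P (f s, x), fderiv ℝ Q (f s, x) (0, v)⟫ = 0 := by
      rw [← hspatZ (f s) x v, ← hspatQ (f s) x v]
      exact hLeg (f s) x v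
    rw [hsplit, map_add, map_smul, map_add, map_smul, inner_add_right,
      real_inner_smul_right, hH s x, hpartZ (f s) x, hpartQ (f s) x, smul_eq_mul]
    linear_combination hx
  simp only [ContinuousLinearMap.add_apply, ContinuousLinearMap.comp_apply,
    ContinuousLinearMap.prod_apply, ContinuousLinearMap.coe_fst', ContinuousLinearMap.coe_snd',
    ContinuousLinearMap.smulRight_apply, ContinuousLinearMap.one_apply, smul_eq_mul,
    ContinuousLinearMap.smul_apply, mul_one]
  linear_combination Real.exp s * key
end
end

section
/- Fix n ≥ 1 and define φ : ℝⁿ × ℝⁿ → ℝ × ℝⁿ × ℝⁿ by φ(x,y) := (−⟪x,y⟫, x, y − ⟪x,y⟫x). Then φ pulls back the 1-jet contact form du − p·dq to the form −2y·dx − x·dy along the unit sphere: for every (x,y) with ‖x‖ = 1 and every tangent vector (ẋ,ẏ) ∈ ℝⁿ × ℝⁿ with ⟪x,ẋ⟫ = 0, writing (u̇, q̇, ṗ) := Dφ(x,y)(ẋ,ẏ) and p := y − ⟪x,y⟫x, one has u̇ − ⟪p, q̇⟫ = −2⟪y,ẋ⟫ − ⟪x,ẏ⟫. -/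
/-! Along `q = x` the jet coordinate `p = y − ⟪x,y⟫x` differs from `y` by a multiple of `x`,
which is invisible to tangent vectors `ẋ ⟂ x`; so `⟪p, q̇⟫ = ⟪y, ẋ⟫`, while
`u̇ = −⟪ẋ, y⟫ − ⟪x, ẏ⟫` by the product rule. -/

open scoped RealInnerProductSpace

noncomputable section

section

variable {E : Type*} [NormedAddCommGroup E] [InnerProductSpace ℝ E]

def jetEmbedding (p : E × E) : ℝ × E × E :=
  (-⟪p.1, p.2⟫, p.1, p.2 - ⟪p.1, p.2⟫ • p.1)

theorem hasFDerivAt_jetEmbedding (x y : E) :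
    HasFDerivAt jetEmbedding
      ((-fderivInnerCLM ℝ (x, y)).prod ((ContinuousLinearMap.fst ℝ E E).prod
        (ContinuousLinearMap.snd ℝ E E - (⟪x, y⟫ • ContinuousLinearMap.fst ℝ E E
          + (fderivInnerCLM ℝ (x, y)).smulRight x)))) (x, y) := by
  have hinner := (hasFDerivAt_fst (𝕜 := ℝ) (p := (x, y))).inner ℝ hasFDerivAt_snd
  exact hinner.neg.prodMk
    (hasFDerivAt_fst.prodMk (hasFDerivAt_snd.sub (hinner.smul hasFDerivAt_fst)))

theorem fderiv_jetEmbedding_apply (x y vx vy : E) :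
    fderiv ℝ jetEmbedding (x, y) (vx, vy) =
      (-(⟪x, vy⟫ + ⟪vx, y⟫), vx, vy - (⟪x, y⟫ • vx + (⟪x, vy⟫ + ⟪vx, y⟫) • x)) := by
  simp [(hasFDerivAt_jetEmbedding x y).fderiv, fderivInnerCLM_apply]

theorem jetEmbedding_pullback_contactForm (x y vx vy : E) (hxvx : ⟪x, vx⟫ = 0) :
    (fderiv ℝ jetEmbedding (x, y) (vx, vy)).1
        - ⟪y - ⟪x, y⟫ • x, (fderiv ℝ jetEmbedding (x, y) (vx, vy)).2.1⟫
      = -2 * ⟪y, vx⟫ - ⟪x, vy⟫ := by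
  rw [fderiv_jetEmbedding_apply, inner_sub_left, real_inner_smul_left, hxvx,
    real_inner_comm vx]
  ring

end

theorem statement_4_general (n : ℕ)
    (φ : EuclideanSpace ℝ (Fin n) × EuclideanSpace ℝ (Fin n) →
      ℝ × EuclideanSpace ℝ (Fin n) × EuclideanSpace ℝ (Fin n))
    (hφ : ∀ x y : EuclideanSpace ℝ (Fin n),
      φ (x, y) = (-⟪x, y⟫, x, y - ⟪x, y⟫ • x)) :
    ∀ x y vx vy : EuclideanSpace ℝ (Fin n), ‖x‖ = 1 → ⟪x, vx⟫ = 0 →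
      (fderiv ℝ φ (x, y) (vx, vy)).1
          - ⟪y - ⟪x, y⟫ • x, (fderiv ℝ φ (x, y) (vx, vy)).2.1⟫
        = -2 * ⟪y, vx⟫ - ⟪x, vy⟫ := by
  intro x y vx vy _ hxvx
  obtain rfl : φ = jetEmbedding := funext fun p => hφ p.1 p.2
  exact jetEmbedding_pullback_contactForm x y vx vy hxvx

/-- The map `φ(x,y) = (−⟪x,y⟫, x, y − ⟪x,y⟫x)` pulls back the 1-jet contact form
`du − p·dq` to `−2y·dx − x·dy` along the unit sphere `{‖x‖ = 1}`. -/
theorem statement_4 (n : ℕ) (hn : 1 ≤ n)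
    (φ : EuclideanSpace ℝ (Fin n) × EuclideanSpace ℝ (Fin n) →
      ℝ × EuclideanSpace ℝ (Fin n) × EuclideanSpace ℝ (Fin n))
    (hφ : ∀ x y : EuclideanSpace ℝ (Fin n),
      φ (x, y) = (-⟪x, y⟫, x, y - ⟪x, y⟫ • x)) :
    ∀ x y vx vy : EuclideanSpace ℝ (Fin n), ‖x‖ = 1 → ⟪x, vx⟫ = 0 →
      (fderiv ℝ φ (x, y) (vx, vy)).1
          - ⟪y - ⟪x, y⟫ • x, (fderiv ℝ φ (x, y) (vx, vy)).2.1⟫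
        = -2 * ⟪y, vx⟫ - ⟪x, vy⟫ :=
  statement_4_general n φ hφ
end
end

section
/- Fix n ≥ 1 and let α be the 1-form on ℝ × ℝⁿ × ℝⁿ (coordinates (z,x,y)) given by α(z,x,y)(ż,ẋ,ẏ) := (z² − ‖x‖² + 1)ż + 2z⟪x,ẋ⟫ + ⟪x,ẏ⟫. Then α is a contact form: for every p ∈ ℝ × ℝⁿ × ℝⁿ, the restriction of the bilinear form dα|_p to the hyperplane ker α(p) is nondegenerate, i.e. for every nonzero u ∈ ℝ × ℝⁿ × ℝⁿ with α(p)(u) = 0 there exists w with α(p)(w) = 0 and dα|_p(u,w) ≠ 0, where dα|_p(u,w) := (Dα(p)(u))(w) − (Dα(p)(w))(u). -/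
open scoped RealInnerProductSpace

noncomputable section

namespace Statement6Aux

abbrev E (n : ℕ) := EuclideanSpace ℝ (Fin n)
abbrev P (n : ℕ) := ℝ × E n × E n

variable (n : ℕ)

def piz : P n →L[ℝ] ℝ := ContinuousLinearMap.fst ℝ ℝ (E n × E n)
def pix : P n →L[ℝ] E n :=
  (ContinuousLinearMap.fst ℝ (E n) (E n)).comp (ContinuousLinearMap.snd ℝ ℝ (E n × E n))
def piy : P n →L[ℝ] E n :=
  (ContinuousLinearMap.snd ℝ (E n) (E n)).comp (ContinuousLinearMap.snd ℝ ℝ (E n × E n))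

@[simp] lemma piz_apply (u : P n) : piz n u = u.1 := rfl
@[simp] lemma pix_apply (u : P n) : pix n u = u.2.1 := rfl
@[simp] lemma piy_apply (u : P n) : piy n u = u.2.2 := rfl

def phi (π : P n →L[ℝ] E n) : E n →L[ℝ] (P n →L[ℝ] ℝ) :=
  LinearMap.toContinuousLinearMap
  { toFun := fun v => (innerSL ℝ v).comp π
    map_add' := fun a b => ContinuousLinearMap.ext fun w => by
      simp [inner_add_left]
    map_smul' := fun c a => ContinuousLinearMap.ext fun w => by
      simp [inner_smul_left] }

@[simp] lemma phi_apply (π : P n →L[ℝ] E n) (v : E n) (u : P n) :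
    phi n π v u = ⟪v, π u⟫ := rfl

def beta : P n → (P n →L[ℝ] ℝ) := fun p =>
  (p.1 * p.1 - ‖p.2.1‖ ^ 2 + 1) • piz n + (2 * p.1) • phi n (pix n) p.2.1
    + phi n (piy n) p.2.1

lemma beta_apply (p u : P n) :
    beta n p u = (p.1 ^ 2 - ‖p.2.1‖ ^ 2 + 1) * u.1
      + 2 * p.1 * ⟪p.2.1, u.2.1⟫ + ⟪p.2.1, u.2.2⟫ := by
  simp only [beta, ContinuousLinearMap.add_apply, ContinuousLinearMap.coe_smul',
    Pi.smul_apply, phi_apply, pix_apply, piy_apply, piz_apply, smul_eq_mul,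
    ContinuousLinearMap.smul_apply]
  ring

lemma fderiv_beta_apply (p u w : P n) :
    fderiv ℝ (beta n) p u w =
      (2 * p.1 * u.1 - 2 * ⟪p.2.1, u.2.1⟫) * w.1 + 2 * u.1 * ⟪p.2.1, w.2.1⟫
        + 2 * p.1 * ⟪u.2.1, w.2.1⟫ + ⟪u.2.1, w.2.2⟫ := by
  have h1 := ((((hasFDerivAt_fst (p := p)).mul (hasFDerivAt_fst (p := p))).sub
      ((pix n).hasFDerivAt.norm_sq)).add_const 1).smul_const (piz n)
  have h2 : HasFDerivAt (fun q : P n => (2 * q.1) • phi n (pix n) q.2.1)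
      ((2 * p.1) • ((phi n (pix n)).comp (pix n))
        + ((2:ℝ) • piz n).smulRight (phi n (pix n) p.2.1)) p := by
    have hc : HasFDerivAt (fun q : P n => 2 * q.1) ((2:ℝ) • piz n) p :=
      hasFDerivAt_fst.const_mul (2:ℝ)
    have hf : HasFDerivAt (fun q : P n => phi n (pix n) q.2.1)
        ((phi n (pix n)).comp (pix n)) p := ((phi n (pix n)).comp (pix n)).hasFDerivAt
    exact hc.smul hf
  have h3 : HasFDerivAt (fun q : P n => phi n (piy n) q.2.1)
      ((phi n (piy n)).comp (pix n)) p := ((phi n (piy n)).comp (pix n)).hasFDerivAt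
  have h : HasFDerivAt (beta n) _ p := (h1.add h2).add h3
  rw [h.fderiv]
  simp [ContinuousLinearMap.smulRight_apply]
  ring

lemma dbeta (p u w : P n) :
    fderiv ℝ (beta n) p u w - fderiv ℝ (beta n) p w u
      = 4 * u.1 * ⟪p.2.1, w.2.1⟫ - 4 * w.1 * ⟪p.2.1, u.2.1⟫
        + ⟪u.2.1, w.2.2⟫ - ⟪w.2.1, u.2.2⟫ := by
  rw [fderiv_beta_apply, fderiv_beta_apply, real_inner_comm w.2.1 u.2.1]
  ring

end Statement6Aux

/-- The 1-form `α = (z² − ‖x‖² + 1)dz + 2z x·dx + x·dy` of the contact (n+1)-handle is a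
contact form: at every point the exterior derivative `dα` is nondegenerate on `ker α`. -/
theorem statement_6 (n : ℕ) (hn : 1 ≤ n)
    (α : ℝ × EuclideanSpace ℝ (Fin n) × EuclideanSpace ℝ (Fin n) →
      (ℝ × EuclideanSpace ℝ (Fin n) × EuclideanSpace ℝ (Fin n) →L[ℝ] ℝ))
    (hα : ∀ p u : ℝ × EuclideanSpace ℝ (Fin n) × EuclideanSpace ℝ (Fin n),
      α p u = (p.1 ^ 2 - ‖p.2.1‖ ^ 2 + 1) * u.1
        + 2 * p.1 * ⟪p.2.1, u.2.1⟫ + ⟪p.2.1, u.2.2⟫) :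
    ∀ p u : ℝ × EuclideanSpace ℝ (Fin n) × EuclideanSpace ℝ (Fin n),
      u ≠ 0 → α p u = 0 →
        ∃ w : ℝ × EuclideanSpace ℝ (Fin n) × EuclideanSpace ℝ (Fin n),
          α p w = 0 ∧ (fderiv ℝ α p u) w - (fderiv ℝ α p w) u ≠ 0 := by
  have hab : α = Statement6Aux.beta n := funext fun q => ContinuousLinearMap.ext fun v => by
    rw [hα, Statement6Aux.beta_apply]
  subst hab
  intro p u hu h0
  rw [Statement6Aux.beta_apply] at h0
  have hS : (0:ℝ) < p.1 ^ 2 + 3 * ‖p.2.1‖ ^ 2 + 1 := by positivity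
  by_cases h2 : u.2.1 = 0
  · -- case u₂ = 0
    set v : EuclideanSpace ℝ (Fin n) := (4 * u.1) • p.2.1 - u.2.2 with hv
    have hvne : v ≠ 0 := by
      intro hv0
      have hveq : u.2.2 = (4 * u.1) • p.2.1 := (sub_eq_zero.mp hv0).symm
      have h0' : u.1 * (p.1 ^ 2 + 3 * ‖p.2.1‖ ^ 2 + 1) = 0 := by
        rw [hveq, h2] at h0
        simp only [inner_zero_right, real_inner_smul_right, real_inner_self_eq_norm_sq] at h0
        nlinarith [h0]
      have hu1 : u.1 = 0 := by
        rcases mul_eq_zero.mp h0' with h | h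
        · exact h
        · exact absurd h hS.ne'
      have h3 : u.2.2 = 0 := by rw [hveq, hu1]; simp
      exact hu (Prod.ext hu1 (Prod.ext h2 h3))
    set t : ℝ := 2 * p.1 * ⟪p.2.1, v⟫ / (p.1 ^ 2 + 3 * ‖p.2.1‖ ^ 2 + 1) with ht
    refine ⟨⟨-t, v, (-(4 * t)) • p.2.1⟩, ?_, ?_⟩
    · rw [Statement6Aux.beta_apply]
      simp only [real_inner_smul_right, real_inner_self_eq_norm_sq, ht]
      field_simp
      ring
    · rw [Statement6Aux.dbeta]
      have key0 : 4 * u.1 * ⟪p.2.1, v⟫ - ⟪v, u.2.2⟫ = ⟪v, v⟫ := by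
        simp only [hv, inner_sub_left, inner_sub_right, real_inner_smul_left,
          real_inner_smul_right, real_inner_comm u.2.2 p.2.1]
        ring
      have key : 4 * u.1 * ⟪p.2.1, v⟫ - ⟪v, u.2.2⟫ = ‖v‖ ^ 2 := by
        rw [key0]; exact real_inner_self_eq_norm_sq v
      simp only [h2, inner_zero_right, inner_zero_left, mul_zero, zero_mul, add_zero,
        sub_zero, zero_add, zero_sub]
      rw [key]
      exact pow_ne_zero 2 (norm_ne_zero_iff.mpr hvne)
  · -- case u₂ ≠ 0
    set t : ℝ := ⟪p.2.1, u.2.1⟫ / (p.1 ^ 2 + 3 * ‖p.2.1‖ ^ 2 + 1) with ht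
    refine ⟨⟨-t, 0, u.2.1 - (4 * t) • p.2.1⟩, ?_, ?_⟩
    · rw [Statement6Aux.beta_apply]
      simp only [inner_zero_right, inner_sub_right, real_inner_smul_right,
        real_inner_self_eq_norm_sq, ht]
      field_simp
      ring
    · rw [Statement6Aux.dbeta]
      have key : ⟪u.2.1, u.2.1 - (4 * t) • p.2.1⟫
          = ‖u.2.1‖ ^ 2 - 4 * t * ⟪p.2.1, u.2.1⟫ := by
        rw [inner_sub_right, real_inner_smul_right, real_inner_self_eq_norm_sq,
          real_inner_comm u.2.1 p.2.1]
      simp only [inner_zero_right, inner_zero_left, mul_zero, zero_mul, add_zero, sub_zero]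
      rw [key]
      intro hcon
      exact pow_ne_zero 2 (norm_ne_zero_iff.mpr h2) (by linarith [hcon])
end
end

section
/- Let n ≥ 1, let f : ℝⁿ × ℝⁿ → ℝⁿ be differentiable at p₀ = (x₀,y₀), and define the bilinear form ω on ℝⁿ × ℝⁿ (tangent vectors written w = (u,v)) by ω(w₁, w₂) := ⟪Df(p₀)(w₁), v₂⟫ − ⟪Df(p₀)(w₂), v₁⟫. If ω is nondegenerate, i.e. for every nonzero w₁ ∈ ℝⁿ × ℝⁿ there exists w₂ with ω(w₁, w₂) ≠ 0, then the linear map A : ℝⁿ → ℝⁿ, A(u) := Df(p₀)(u,0), is a linear isomorphism. -/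
open scoped RealInnerProductSpace

noncomputable section

/-- First step of the relative Arnold–Liouville theorem: if the exterior derivative
`ω(w₁,w₂) = ⟪Df(p₀)w₁, v₂⟫ − ⟪Df(p₀)w₂, v₁⟫` of the 1-form `Σᵢ fᵢ dyᵢ` is nondegenerate
at `p₀`, then the partial differential `u ↦ Df(p₀)(u,0)` is a linear isomorphism. -/
theorem statement_11 (n : ℕ) (hn : 1 ≤ n)
    (f : EuclideanSpace ℝ (Fin n) × EuclideanSpace ℝ (Fin n) → EuclideanSpace ℝ (Fin n))
    (p₀ : EuclideanSpace ℝ (Fin n) × EuclideanSpace ℝ (Fin n))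
    (hf : DifferentiableAt ℝ f p₀)
    (hnd : ∀ w₁ : EuclideanSpace ℝ (Fin n) × EuclideanSpace ℝ (Fin n), w₁ ≠ 0 →
      ∃ w₂ : EuclideanSpace ℝ (Fin n) × EuclideanSpace ℝ (Fin n),
        ⟪fderiv ℝ f p₀ w₁, w₂.2⟫ - ⟪fderiv ℝ f p₀ w₂, w₁.2⟫ ≠ 0) :
    Function.Bijective
      (fun u : EuclideanSpace ℝ (Fin n) =>
        fderiv ℝ f p₀ (u, (0 : EuclideanSpace ℝ (Fin n)))) := by
  set A : EuclideanSpace ℝ (Fin n) →ₗ[ℝ] EuclideanSpace ℝ (Fin n) :=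
    (fderiv ℝ f p₀ : _ →ₗ[ℝ] _).comp (LinearMap.inl ℝ (EuclideanSpace ℝ (Fin n)) (EuclideanSpace ℝ (Fin n))) with hA
  have hfun : (fun u : EuclideanSpace ℝ (Fin n) =>
      fderiv ℝ f p₀ (u, (0 : EuclideanSpace ℝ (Fin n)))) = A := rfl
  rw [hfun]
  have hinj : Function.Injective A := by
    rw [← LinearMap.ker_eq_bot, LinearMap.ker_eq_bot']
    intro u hu
    by_contra hu0
    have hw : ((u, (0 : EuclideanSpace ℝ (Fin n))) :
        EuclideanSpace ℝ (Fin n) × EuclideanSpace ℝ (Fin n)) ≠ 0 := by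
      simp [Prod.ext_iff, hu0]
    obtain ⟨w₂, hw₂⟩ := hnd _ hw
    apply hw₂
    have h1 : fderiv ℝ f p₀ (u, (0 : EuclideanSpace ℝ (Fin n))) = 0 := hu
    simp [h1]
  exact ⟨hinj, LinearMap.injective_iff_surjective.mp hinj⟩
end
end

section
/- Let n ≥ 1, let f : ℝⁿ × ℝⁿ → ℝⁿ be differentiable at p₀ = (x₀,y₀), and define ω(w₁, w₂) := ⟪Df(p₀)(w₁), v₂⟫ − ⟪Df(p₀)(w₂), v₁⟫ for w_j = (u_j, v_j) ∈ ℝⁿ × ℝⁿ. Suppose the linear map A : ℝⁿ → ℝⁿ, A(u) := Df(p₀)(u,0), is surjective. If a vector (X,Y) ∈ ℝⁿ × ℝⁿ satisfies ω((X,Y), (u,v)) = ⟪f(p₀), v⟫ for all (u,v) ∈ ℝⁿ × ℝⁿ, then Y = 0 and Df(p₀)(X,0) = f(p₀). -/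
open scoped RealInnerProductSpace

noncomputable section

/-- Second step of the relative Arnold–Liouville theorem: if `u ↦ Df(p₀)(u,0)` is
surjective and `(X,Y)` satisfies the Liouville condition
`ω((X,Y),(u,v)) = ⟪f(p₀), v⟫` for all `(u,v)`, then `Y = 0` and `Df(p₀)(X,0) = f(p₀)`. -/
theorem statement_12 (n : ℕ) (hn : 1 ≤ n)
    (f : EuclideanSpace ℝ (Fin n) × EuclideanSpace ℝ (Fin n) → EuclideanSpace ℝ (Fin n))
    (p₀ : EuclideanSpace ℝ (Fin n) × EuclideanSpace ℝ (Fin n))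
    (hf : DifferentiableAt ℝ f p₀)
    (hsurj : Function.Surjective
      (fun u : EuclideanSpace ℝ (Fin n) =>
        fderiv ℝ f p₀ (u, (0 : EuclideanSpace ℝ (Fin n)))))
    (X Y : EuclideanSpace ℝ (Fin n))
    (hLiou : ∀ u v : EuclideanSpace ℝ (Fin n),
      ⟪fderiv ℝ f p₀ (X, Y), v⟫ - ⟪fderiv ℝ f p₀ (u, v), Y⟫ = ⟪f p₀, v⟫) :
    Y = 0 ∧ fderiv ℝ f p₀ (X, (0 : EuclideanSpace ℝ (Fin n))) = f p₀ := by
  have hY : Y = 0 := by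
    have h0 : ∀ u, ⟪fderiv ℝ f p₀ (u, (0 : EuclideanSpace ℝ (Fin n))), Y⟫ = 0 := by
      intro u
      have := hLiou u 0
      simpa using this
    have hYY : ⟪Y, Y⟫ = 0 := by
      obtain ⟨u, hu⟩ := hsurj Y
      have := h0 u
      rw [show (fderiv ℝ f p₀) (u, 0) = Y from hu] at this
      exact this
    exact inner_self_eq_zero.mp hYY
  subst hY
  refine ⟨rfl, ?_⟩
  have h1 : ∀ v, ⟪fderiv ℝ f p₀ (X, (0 : EuclideanSpace ℝ (Fin n))) - f p₀, v⟫ = 0 := by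
    intro v
    have := hLiou X v
    simp only [inner_zero_right, sub_zero] at this
    rw [inner_sub_left, this, sub_self]
  have := h1 (fderiv ℝ f p₀ (X, 0) - f p₀)
  rw [inner_self_eq_zero] at this
  exact sub_eq_zero.mp this
end
end

section
/- Let n ≥ 2 and define ψ : (ℝ^{n−1} ∖ {0}) × ℝ → ℝⁿ × ℝⁿ × ℝ (coordinates (x,y,z)) as follows: for 1 ≤ i ≤ n−1, the i-th coordinates are (xᵢ, yᵢ) = (sᵢ cos(πτ), −sᵢ sin(πτ)); the n-th coordinates are (xₙ, yₙ) = (‖s‖/√2)·(cos(2πτ), sin(2πτ)); and z = 0. Then the image of ψ is Legendrian for the standard contact form: for every (s,τ) with s ≠ 0 and every (v,σ) ∈ ℝ^{n−1} × ℝ, α_std(ψ(s,τ))(Dψ(s,τ)(v,σ)) = 0, where α_std(x,y,z)(ẋ,ẏ,ż) := ż + Σ_{i=1}^{n} (xᵢ ẏᵢ − yᵢ ẋᵢ). -/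
/-!
In each coordinate plane, x dy - y dx = r² dθ in polar coordinates (r, θ), so along a map
written in polar coordinates the contact form pulls back to dz + Σⱼ rⱼ² dθⱼ. For the peel,
the first n - 1 planes have radius sᵢ and angle -πτ and the last one has radius ‖s‖/√2 and
angle 2πτ, so the pull-back is (-π Σᵢ sᵢ² + 2π ‖s‖²/2) dτ = 0. The radius ‖s‖ is smooth
only away from s = 0.
-/

open Real

section

variable {E : Type*} [NormedAddCommGroup E] [NormedSpace ℝ E]

theorem ContinuousLinearMap.apply_fderiv {F : Type*} [NormedAddCommGroup F] [NormedSpace ℝ F]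
    (L : F →L[ℝ] ℝ) {ψ : E → F} {q : E} (hψ : DifferentiableAt ℝ ψ q) (w : E) :
    L (fderiv ℝ ψ q w) = fderiv ℝ (fun p => L (ψ p)) q w :=
  (DFunLike.congr_fun (L.hasFDerivAt.comp q hψ.hasFDerivAt).fderiv w).symm

theorem polar_wedge_fderiv_eq {r θ : E → ℝ} {θ' : E →L[ℝ] ℝ} {q : E}
    (hr : DifferentiableAt ℝ r q) (hθ : HasFDerivAt θ θ' q) (w : E) :
    r q * cos (θ q) * fderiv ℝ (fun p => r p * sin (θ p)) q w
      - r q * sin (θ q) * fderiv ℝ (fun p => r p * cos (θ p)) q w = r q ^ 2 * θ' w := by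
  rw [(hr.hasFDerivAt.fun_mul hθ.sin).fderiv, (hr.hasFDerivAt.fun_mul hθ.cos).fderiv]
  simp only [FunLike.coe_add, FunLike.coe_smul, Pi.add_apply, Pi.smul_apply, smul_eq_mul]
  linear_combination (r q ^ 2 * θ' w) * sin_sq_add_cos_sq (θ q)

variable {ι : Type*} [Fintype ι]

def stdContactForm (P V : EuclideanSpace ℝ ι × EuclideanSpace ℝ ι × ℝ) : ℝ :=
  V.2.2 + ∑ i, (P.1 i * V.2.1 i - P.2.1 i * V.1 i)

def HasPolarCoords (ψ : E → EuclideanSpace ℝ ι × EuclideanSpace ℝ ι × ℝ) (i : ι)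
    (r θ : E → ℝ) : Prop :=
  ∀ p, (ψ p).1 i = r p * cos (θ p) ∧ (ψ p).2.1 i = r p * sin (θ p)

variable {ψ : E → EuclideanSpace ℝ ι × EuclideanSpace ℝ ι × ℝ} {q : E}

theorem differentiableAt_of_hasPolarCoords {r θ : ι → E → ℝ}
    (hpolar : ∀ i, HasPolarCoords ψ i (r i) (θ i)) (hr : ∀ i, DifferentiableAt ℝ (r i) q)
    (hθ : ∀ i, DifferentiableAt ℝ (θ i) q) (hz : DifferentiableAt ℝ (fun p => (ψ p).2.2) q) :
    DifferentiableAt ℝ ψ q := by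
  have hx : ∀ i, (fun p => (ψ p).1 i) = fun p => r i p * cos (θ i p) :=
    fun i => funext fun p => (hpolar i p).1
  have hy : ∀ i, (fun p => (ψ p).2.1 i) = fun p => r i p * sin (θ i p) :=
    fun i => funext fun p => (hpolar i p).2
  refine .prodMk (differentiableAt_euclidean.2 fun i => ?_)
    (.prodMk (differentiableAt_euclidean.2 fun i => ?_) hz)
  · rw [hx]; exact (hr i).mul (hθ i).cos
  · rw [hy]; exact (hr i).mul (hθ i).sin

theorem HasPolarCoords.wedge_fderiv {i : ι} {r θ : E → ℝ} {θ' : E →L[ℝ] ℝ}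
    (hpolar : HasPolarCoords ψ i r θ) (hψ : DifferentiableAt ℝ ψ q)
    (hr : DifferentiableAt ℝ r q) (hθ : HasFDerivAt θ θ' q) (w : E) :
    (ψ q).1 i * (fderiv ℝ ψ q w).2.1 i - (ψ q).2.1 i * (fderiv ℝ ψ q w).1 i
      = r q ^ 2 * θ' w := by
  have hx : (fderiv ℝ ψ q w).1 i = fderiv ℝ (fun p => r p * cos (θ p)) q w := by
    rw [← funext fun p => (hpolar p).1]
    exact ((EuclideanSpace.proj i).comp (.fst ℝ _ _)).apply_fderiv hψ w
  have hy : (fderiv ℝ ψ q w).2.1 i = fderiv ℝ (fun p => r p * sin (θ p)) q w := by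
    rw [← funext fun p => (hpolar p).2]
    exact ((EuclideanSpace.proj i).comp ((ContinuousLinearMap.fst ℝ _ ℝ).comp
      (.snd ℝ _ _))).apply_fderiv hψ w
  rw [hx, hy, (hpolar q).1, (hpolar q).2]
  exact polar_wedge_fderiv_eq hr hθ w

theorem stdContactForm_fderiv_of_hasPolarCoords {r θ : ι → E → ℝ} {θ' : ι → E →L[ℝ] ℝ}
    {z' : E →L[ℝ] ℝ} (hpolar : ∀ i, HasPolarCoords ψ i (r i) (θ i))
    (hr : ∀ i, DifferentiableAt ℝ (r i) q) (hθ : ∀ i, HasFDerivAt (θ i) (θ' i) q)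
    (hz : HasFDerivAt (fun p => (ψ p).2.2) z' q) (w : E) :
    stdContactForm (ψ q) (fderiv ℝ ψ q w) = z' w + ∑ i, r i q ^ 2 * θ' i w := by
  have hψ := differentiableAt_of_hasPolarCoords hpolar hr (fun i => (hθ i).differentiableAt)
    hz.differentiableAt
  have hdz : (fderiv ℝ ψ q w).2.2 = z' w := by
    rw [← hz.fderiv]
    exact ((ContinuousLinearMap.snd ℝ _ ℝ).comp (.snd ℝ _ _)).apply_fderiv hψ w
  rw [stdContactForm, hdz]
  congr 1
  exact Finset.sum_congr rfl fun i _ => (hpolar i).wedge_fderiv hψ (hr i) (hθ i) w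

end

theorem statement_15_general (m : ℕ)
    (ψ : EuclideanSpace ℝ (Fin m) × ℝ →
      EuclideanSpace ℝ (Fin (m + 1)) × EuclideanSpace ℝ (Fin (m + 1)) × ℝ)
    (hψx : ∀ (s : EuclideanSpace ℝ (Fin m)) (τ : ℝ) (i : Fin m),
      (ψ (s, τ)).1 (Fin.castSucc i) = s i * Real.cos (Real.pi * τ))
    (hψy : ∀ (s : EuclideanSpace ℝ (Fin m)) (τ : ℝ) (i : Fin m),
      (ψ (s, τ)).2.1 (Fin.castSucc i) = -(s i * Real.sin (Real.pi * τ)))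
    (hψxn : ∀ (s : EuclideanSpace ℝ (Fin m)) (τ : ℝ),
      (ψ (s, τ)).1 (Fin.last m) = (‖s‖ / Real.sqrt 2) * Real.cos (2 * Real.pi * τ))
    (hψyn : ∀ (s : EuclideanSpace ℝ (Fin m)) (τ : ℝ),
      (ψ (s, τ)).2.1 (Fin.last m) = (‖s‖ / Real.sqrt 2) * Real.sin (2 * Real.pi * τ))
    (hψz : ∀ (s : EuclideanSpace ℝ (Fin m)) (τ : ℝ), (ψ (s, τ)).2.2 = 0) :
    ∀ (s : EuclideanSpace ℝ (Fin m)) (τ : ℝ), s ≠ 0 →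
      ∀ (v : EuclideanSpace ℝ (Fin m)) (σ : ℝ),
        (fderiv ℝ ψ (s, τ) (v, σ)).2.2
          + ∑ i : Fin (m + 1),
              ((ψ (s, τ)).1 i * (fderiv ℝ ψ (s, τ) (v, σ)).2.1 i
                - (ψ (s, τ)).2.1 i * (fderiv ℝ ψ (s, τ) (v, σ)).1 i) = 0 := by
  intro s τ hs v σ
  let r : Fin (m + 1) → EuclideanSpace ℝ (Fin m) × ℝ → ℝ :=
    Fin.lastCases (fun p => ‖p.1‖ / √2) fun i p => p.1 i
  let ω : Fin (m + 1) → ℝ := Fin.lastCases (2 * π) fun _ => -π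
  have hpolar : ∀ j, HasPolarCoords ψ j (r j) (fun p => ω j * p.2) := by
    refine Fin.lastCases (fun p => ?_) (fun i p => ?_)
    · simp [r, ω, hψxn, hψyn, mul_assoc]
    · simp [r, ω, hψx, hψy]
  have hr : ∀ j, DifferentiableAt ℝ (r j) (s, τ) := by
    refine Fin.lastCases ?_ fun i => ?_
    · simpa only [r, Fin.lastCases_last, div_eq_mul_inv] using
        ((differentiableAt_fst (p := (s, τ))).norm ℝ hs).mul_const (√2)⁻¹
    · simpa only [r, Fin.lastCases_castSucc] using
        differentiableAt_euclidean.1 (differentiableAt_fst (p := (s, τ))) i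
  have hz : (fun p => (ψ p).2.2) = fun _ => (0 : ℝ) := funext fun p => hψz p.1 p.2
  have hα := stdContactForm_fderiv_of_hasPolarCoords hpolar hr
    (fun j => hasFDerivAt_snd.const_mul (ω j)) (hz ▸ hasFDerivAt_const 0 (s, τ)) (v, σ)
  have hnorm : ‖s‖ ^ 2 = ∑ i, s i ^ 2 := by simp [EuclideanSpace.norm_sq_eq]
  change stdContactForm (ψ (s, τ)) (fderiv ℝ ψ (s, τ) (v, σ)) = 0
  rw [hα]
  simp only [FunLike.coe_zero, FunLike.coe_smul, Pi.zero_apply, Pi.smul_apply,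
    ContinuousLinearMap.coe_snd', smul_eq_mul, Fin.sum_univ_castSucc, Fin.lastCases_castSucc,
    Fin.lastCases_last, ← Finset.sum_mul, div_pow, hnorm, sq_sqrt zero_le_two, r, ω]
  ring

/-- The peel of the overtwisted orange is Legendrian away from the origin: writing
`n = m + 1` with `m ≥ 1`, the map `ψ(s,τ)` with coordinates
`(xᵢ, yᵢ) = (sᵢ cos(πτ), −sᵢ sin(πτ))` for `i < m`,
`(xₘ, yₘ) = (‖s‖/√2)(cos(2πτ), sin(2πτ))` and `z = 0` satisfies
`α_std(ψ(s,τ))(Dψ(s,τ)(v,σ)) = 0` for all `s ≠ 0`, where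
`α_std(x,y,z)(ẋ,ẏ,ż) = ż + Σᵢ (xᵢẏᵢ − yᵢẋᵢ)`. -/
theorem statement_15 (m : ℕ) (hm : 1 ≤ m)
    (ψ : EuclideanSpace ℝ (Fin m) × ℝ →
      EuclideanSpace ℝ (Fin (m + 1)) × EuclideanSpace ℝ (Fin (m + 1)) × ℝ)
    (hψx : ∀ (s : EuclideanSpace ℝ (Fin m)) (τ : ℝ) (i : Fin m),
      (ψ (s, τ)).1 (Fin.castSucc i) = s i * Real.cos (Real.pi * τ))
    (hψy : ∀ (s : EuclideanSpace ℝ (Fin m)) (τ : ℝ) (i : Fin m),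
      (ψ (s, τ)).2.1 (Fin.castSucc i) = -(s i * Real.sin (Real.pi * τ)))
    (hψxn : ∀ (s : EuclideanSpace ℝ (Fin m)) (τ : ℝ),
      (ψ (s, τ)).1 (Fin.last m) = (‖s‖ / Real.sqrt 2) * Real.cos (2 * Real.pi * τ))
    (hψyn : ∀ (s : EuclideanSpace ℝ (Fin m)) (τ : ℝ),
      (ψ (s, τ)).2.1 (Fin.last m) = (‖s‖ / Real.sqrt 2) * Real.sin (2 * Real.pi * τ))
    (hψz : ∀ (s : EuclideanSpace ℝ (Fin m)) (τ : ℝ), (ψ (s, τ)).2.2 = 0) :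
    ∀ (s : EuclideanSpace ℝ (Fin m)) (τ : ℝ), s ≠ 0 →
      ∀ (v : EuclideanSpace ℝ (Fin m)) (σ : ℝ),
        (fderiv ℝ ψ (s, τ) (v, σ)).2.2
          + ∑ i : Fin (m + 1),
              ((ψ (s, τ)).1 i * (fderiv ℝ ψ (s, τ) (v, σ)).2.1 i
                - (ψ (s, τ)).2.1 i * (fderiv ℝ ψ (s, τ) (v, σ)).1 i) = 0 :=
  statement_15_general m ψ hψx hψy hψxn hψyn hψz
end
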